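/- arXiv:2209.15600 — 3 statements merged into one kernel-verified Lean document; each statement's English description precedes it below -/
import Mathlib

section
/- With R_>^ν and R_<^ν defined as the (-1)^g-normalized δ-derivatives at δ = 0 of the respective contour integrals (the numerator for R_<^ν being (e^{u(λ+μ+1)} - e^{u(λ-μ+k+2)+δφ̇(u)}) e^{u(ν₁+ν₂)/2} (2k+4+δφ̈(u))^g), their difference satisfies R_>^ν(k;λ,μ) − R_<^ν(k;λ,μ) = g·(−(2k+4))^{g−1}·Res_{u=0} [ e^{u(λ−μ)} e^{u(ν₁+ν₂)/2} φ̈(u) / (2 sinh(u/2))^{2g} ] du. -/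
open Complex

/-- The rank-2 character `φ(u) = sinh((d+1)u/2)/sinh(u/2)` where `d = ν₁ - ν₂`. -/
noncomputable def phiC (d : ℤ) (u : ℂ) : ℂ :=
  Complex.sinh (((d : ℂ) + 1) * u / 2) / Complex.sinh (u / 2)

/-- `φ̇ = 2 φ'`. -/
noncomputable def phiDot (d : ℤ) (u : ℂ) : ℂ := 2 * deriv (phiC d) u

/-- `φ̈ = 2 φ̇' = 4 φ''`. -/
noncomputable def phiDDot (d : ℤ) (u : ℂ) : ℂ := 2 * deriv (fun y => phiDot d y) u

/-- `R_>^ν(k;λ,μ)`, defined as `(-1)^g` times the `δ`-derivative at `δ = 0` of the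
contour integral `(1/2πi)∮_{|u|=ε} (e^{u(λ+μ+1)} - e^{u(λ-μ)}) e^{u(ν₁+ν₂)/2}
(2k+4+δφ̈(u))^g / ((2 sinh(u/2))^{2g} (1 - e^{u(k+2)+δφ̇(u)})) du`. -/
noncomputable def Rgt (g k : ℕ) (ν₁ ν₂ : ℤ) (ε : ℝ) (l m : ℤ) : ℂ :=
  (-1 : ℂ) ^ g *
    deriv (fun δ : ℂ =>
      (2 * (Real.pi : ℂ) * Complex.I)⁻¹ *
        ∮ u in C(0, ε),
          (Complex.exp (u * ((l : ℂ) + (m : ℂ) + 1)) - Complex.exp (u * ((l : ℂ) - (m : ℂ)))) *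
              Complex.exp (u * ((ν₁ : ℂ) + (ν₂ : ℂ)) / 2) *
              (2 * (k : ℂ) + 4 + δ * phiDDot (ν₁ - ν₂) u) ^ g /
            ((2 * Complex.sinh (u / 2)) ^ (2 * g) *
              (1 - Complex.exp (u * ((k : ℂ) + 2) + δ * phiDot (ν₁ - ν₂) u)))) 0


/-- `R_<^ν(k;λ,μ)`, with numerator `(e^{u(λ+μ+1)} − e^{u(λ−μ+k+2)+δφ̇(u)})
e^{u(ν₁+ν₂)/2}(2k+4+δφ̈(u))^g`. -/
noncomputable def Rlt (g k : ℕ) (ν₁ ν₂ : ℤ) (ε : ℝ) (l m : ℤ) : ℂ :=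
  (-1 : ℂ) ^ g *
    deriv (fun δ : ℂ =>
      (2 * (Real.pi : ℂ) * Complex.I)⁻¹ *
        ∮ u in C(0, ε),
          (Complex.exp (u * ((l : ℂ) + (m : ℂ) + 1)) -
                Complex.exp (u * ((l : ℂ) - (m : ℂ) + (k : ℂ) + 2) + δ * phiDot (ν₁ - ν₂) u)) *
              Complex.exp (u * ((ν₁ : ℂ) + (ν₂ : ℂ)) / 2) *
              (2 * (k : ℂ) + 4 + δ * phiDDot (ν₁ - ν₂) u) ^ g /
            ((2 * Complex.sinh (u / 2)) ^ (2 * g) *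
              (1 - Complex.exp (u * ((k : ℂ) + 2) + δ * phiDot (ν₁ - ν₂) u)))) 0

/-!
On the circle `|u| = ε` the integrands of `R_>` and `R_<` differ only in their numerators, and
since `e^{u(λ-μ+k+2)+δφ̇} = e^{u(λ-μ)} e^{u(k+2)+δφ̇}` the factor `1 - e^{u(k+2)+δφ̇}` cancels from
their difference, which is `-e^{u(λ-μ)} e^{u(ν₁+ν₂)/2} (2k+4+δφ̈)^g / (2 sinh(u/2))^{2g}`.
Its `δ`-derivative at `0` is `-g (2k+4)^{g-1}` times the residue integrand, and `(-1)^g` turns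
this into `g (-(2k+4))^{g-1}`. Differentiating under `∮` is justified because for
`ε < 2π/(k+2)` both integrands are jointly analytic in `(δ, u)` near `{0} × {|u| = ε}`.
-/

open Metric Set Filter Topology

theorem Complex.exp_ne_one_of_norm_lt {z : ℂ} (hz : z ≠ 0) (h : ‖z‖ < 2 * Real.pi) :
    Complex.exp z ≠ 1 := by
  rw [Ne, Complex.exp_eq_one_iff]
  rintro ⟨n, rfl⟩
  have hn : (1 : ℝ) ≤ |(n : ℝ)| := by
    exact_mod_cast Int.one_le_abs fun hn => hz (by simp [hn])
  rw [norm_mul, norm_mul, norm_mul, Complex.norm_intCast, Complex.norm_I, Complex.norm_real,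
    Complex.norm_two, Real.norm_of_nonneg Real.pi_pos.le] at h
  nlinarith [Real.pi_pos]

theorem Complex.sinh_ne_zero_of_norm_lt {z : ℂ} (hz : z ≠ 0) (h : ‖z‖ < Real.pi) :
    Complex.sinh z ≠ 0 := by
  have h2 : Complex.exp (2 * z) ≠ 1 := Complex.exp_ne_one_of_norm_lt (mul_ne_zero two_ne_zero hz)
    (by rw [norm_mul, Complex.norm_two]; linarith)
  contrapose! h2
  rw [Complex.sinh, div_eq_zero_iff, sub_eq_zero] at h2
  rw [two_mul, Complex.exp_add]
  nth_rw 1 [h2.resolve_right two_ne_zero]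
  rw [← Complex.exp_add, neg_add_cancel, Complex.exp_zero]

theorem sinh_half_ne_zero_and_exp_ne_one {k : ℕ} {u : ℂ} (hu₀ : u ≠ 0)
    (hu : ‖u‖ * ((k : ℝ) + 2) < 2 * Real.pi) :
    Complex.sinh (u / 2) ≠ 0 ∧ Complex.exp (u * ((k : ℂ) + 2)) ≠ 1 := by
  have hk : ‖(k : ℂ) + 2‖ = (k : ℝ) + 2 := by norm_cast
  refine ⟨Complex.sinh_ne_zero_of_norm_lt (div_ne_zero hu₀ two_ne_zero) ?_,
    Complex.exp_ne_one_of_norm_lt (mul_ne_zero hu₀ (by norm_cast)) (by rwa [norm_mul, hk])⟩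
  rw [norm_div, Complex.norm_two]
  nlinarith [norm_nonneg u, (k.cast_nonneg : (0 : ℝ) ≤ k)]

theorem analyticAt_phiC (d : ℤ) {u : ℂ} (hu : Complex.sinh (u / 2) ≠ 0) :
    AnalyticAt ℂ (phiC d) u := by
  have hsinh : ∀ w, AnalyticAt ℂ Complex.sinh w := Complex.differentiable_sinh.analyticAt
  unfold phiC
  fun_prop (disch := assumption)

theorem analyticAt_phiDot (d : ℤ) {u : ℂ} (hu : Complex.sinh (u / 2) ≠ 0) :
    AnalyticAt ℂ (phiDot d) u := by
  have := (analyticAt_phiC d hu).deriv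
  unfold phiDot
  fun_prop

theorem analyticAt_phiDDot (d : ℤ) {u : ℂ} (hu : Complex.sinh (u / 2) ≠ 0) :
    AnalyticAt ℂ (phiDDot d) u := by
  have := (analyticAt_phiDot d hu).deriv
  unfold phiDDot
  fun_prop

theorem exists_closedBall_prod_subset {X Y : Type*} [PseudoMetricSpace X] [TopologicalSpace Y]
    {x : X} {K : Set Y} {U : Set (X × Y)} (hK : IsCompact K) (hU : IsOpen U)
    (hKU : {x} ×ˢ K ⊆ U) : ∃ r > 0, closedBall x r ×ˢ K ⊆ U := by
  obtain ⟨V, W, hV, -, hxV, hKW, hVW⟩ := generalized_tube_lemma isCompact_singleton hK hU hKU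
  obtain ⟨r, hr, hrV⟩ := Metric.isOpen_iff.mp hV x (hxV rfl)
  exact ⟨r / 2, half_pos hr,
    (prod_mono ((closedBall_subset_ball (half_lt_self hr)).trans hrV) hKW).trans hVW⟩

section ParametricCircleIntegral

variable {E : Type*} [NormedAddCommGroup E] [NormedSpace ℂ E] {F : ℂ × ℂ → E}

theorem ContinuousOn.continuous_circleIntegrand {f : ℂ → E} {c : ℂ} {R : ℝ}
    (hf : ContinuousOn f (sphere c |R|)) :
    Continuous fun θ => deriv (circleMap c R) θ • f (circleMap c R θ) := by
  have hderiv : Continuous (deriv (circleMap c R)) := by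
    rw [funext (deriv_circleMap c R)]
    fun_prop
  exact hderiv.smul (hf.comp_continuous (continuous_circleMap c R) (circleMap_mem_sphere' c R))

theorem hasDerivAt_fst_of_analyticAt {p : ℂ × ℂ} (hF : AnalyticAt ℂ F p) :
    HasDerivAt (fun z => F (z, p.2)) (fderiv ℂ F p (1, 0)) p.1 :=
  hF.differentiableAt.hasFDerivAt.comp_hasDerivAt p.1
    ((hasDerivAt_id p.1).prodMk (hasDerivAt_const p.1 p.2))

variable [CompleteSpace E]

theorem continuousOn_deriv_fst_of_analyticAt {s : Set (ℂ × ℂ)}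
    (hF : ∀ p ∈ s, AnalyticAt ℂ F p) :
    ContinuousOn (fun p : ℂ × ℂ => deriv (fun z => F (z, p.2)) p.1) s := by
  refine ContinuousOn.congr (f := fun p => fderiv ℂ F p (1, 0)) ?_
    fun p hp => (hasDerivAt_fst_of_analyticAt (hF p hp)).deriv
  exact fun p hp => ((hF p hp).fderiv.continuousAt.clm_apply continuousAt_const).continuousWithinAt

theorem continuousOn_deriv_fst_of_analyticAt_sphere {z₀ c : ℂ} {R : ℝ}
    (hF : ∀ u ∈ sphere c |R|, AnalyticAt ℂ F (z₀, u)) :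
    ContinuousOn (fun u => deriv (fun z => F (z, u)) z₀) (sphere c |R|) :=
  (continuousOn_deriv_fst_of_analyticAt (s := {z₀} ×ˢ sphere c |R|) fun p ⟨hp₁, hp₂⟩ =>
    (show p = (z₀, p.2) from Prod.ext hp₁ rfl) ▸ hF p.2 hp₂).comp
      (continuous_const.prodMk continuous_id).continuousOn fun _ hu => ⟨rfl, hu⟩

theorem hasDerivAt_circleIntegral_of_analyticAt {z₀ c : ℂ} {R : ℝ}
    (hF : ∀ u ∈ sphere c |R|, AnalyticAt ℂ F (z₀, u)) :
    HasDerivAt (fun z => ∮ u in C(c, R), F (z, u))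
      (∮ u in C(c, R), deriv (fun z => F (z, u)) z₀) z₀ := by
  -- analyticity is an open condition, so it holds on a tube around `{z₀} × sphere c |R|`,
  -- where the continuous `∂F/∂z` is bounded and dominates the difference quotients
  obtain ⟨r, hr, hsub⟩ := exists_closedBall_prod_subset (isCompact_sphere c |R|)
    (isOpen_analyticAt ℂ F) (by rintro ⟨z, u⟩ ⟨rfl, hu⟩; exact hF u hu)
  have hF' : ∀ p ∈ closedBall z₀ r ×ˢ sphere c |R|, AnalyticAt ℂ F p := fun p hp => hsub hp
  obtain ⟨C, hC⟩ := ((isCompact_closedBall z₀ r).prod (isCompact_sphere c |R|)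
    ).exists_bound_of_continuousOn (continuousOn_deriv_fst_of_analyticAt hF')
  have hcont {z : ℂ} (hz : z ∈ closedBall z₀ r) :
      Continuous fun θ => deriv (circleMap c R) θ • F (z, circleMap c R θ) :=
    ContinuousOn.continuous_circleIntegrand fun u hu =>
      ((hF' _ ⟨hz, hu⟩).continuousAt.comp (by fun_prop : Continuous fun u => (z, u)).continuousAt
        ).continuousWithinAt
  have hcont' : Continuous fun θ =>
      deriv (circleMap c R) θ • deriv (fun z => F (z, circleMap c R θ)) z₀ :=
    (continuousOn_deriv_fst_of_analyticAt_sphere hF).continuous_circleIntegrand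
  refine (intervalIntegral.hasDerivAt_integral_of_dominated_loc_of_deriv_le
    (F := fun z θ => deriv (circleMap c R) θ • F (z, circleMap c R θ))
    (F' := fun z θ => deriv (circleMap c R) θ • deriv (fun w => F (w, circleMap c R θ)) z)
    (bound := fun _ => |R| * C) (ball_mem_nhds z₀ hr)
    (eventually_of_mem (closedBall_mem_nhds z₀ hr) fun z hz => (hcont hz).aestronglyMeasurable)
    ((hcont (mem_closedBall_self hr.le)).intervalIntegrable _ _) hcont'.aestronglyMeasurable
    (.of_forall fun θ _ z hz => ?_) intervalIntegrable_const (.of_forall fun θ _ z hz => ?_)).2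
  · have hmem : (z, circleMap c R θ) ∈ closedBall z₀ r ×ˢ sphere c |R| :=
      ⟨ball_subset_closedBall hz, circleMap_mem_sphere' c R θ⟩
    rw [norm_smul, deriv_circleMap, norm_mul, norm_circleMap_zero, Complex.norm_I, mul_one]
    exact mul_le_mul_of_nonneg_left (hC _ hmem) (abs_nonneg R)
  · have h := hasDerivAt_fst_of_analyticAt
      (hF' (z, circleMap c R θ) ⟨ball_subset_closedBall hz, circleMap_mem_sphere' c R θ⟩)
    exact (h.deriv ▸ h).const_smul _

end ParametricCircleIntegral

noncomputable def contourIntegrand (g k : ℕ) (d : ℤ) (γ : ℂ) (N : ℂ × ℂ → ℂ) (p : ℂ × ℂ) : ℂ :=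
  N p * Complex.exp (p.2 * γ / 2) * (2 * (k : ℂ) + 4 + p.1 * phiDDot d p.2) ^ g /
    ((2 * Complex.sinh (p.2 / 2)) ^ (2 * g) *
      (1 - Complex.exp (p.2 * ((k : ℂ) + 2) + p.1 * phiDot d p.2)))

theorem analyticAt_contourIntegrand (g k : ℕ) (d : ℤ) (γ : ℂ) {N : ℂ × ℂ → ℂ} {u : ℂ}
    (hN : AnalyticAt ℂ N (0, u)) (hS : Complex.sinh (u / 2) ≠ 0)
    (hW : Complex.exp (u * ((k : ℂ) + 2)) ≠ 1) :
    AnalyticAt ℂ (contourIntegrand g k d γ N) (0, u) := by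
  have hfst : AnalyticAt ℂ (fun p : ℂ × ℂ => p.1) (0, u) := analyticAt_fst
  have hsnd : AnalyticAt ℂ (fun p : ℂ × ℂ => p.2) (0, u) := analyticAt_snd
  have hsinh : ∀ w, AnalyticAt ℂ Complex.sinh w := Complex.differentiable_sinh.analyticAt
  have hφ : AnalyticAt ℂ (fun p : ℂ × ℂ => phiDot d p.2) (0, u) :=
    (analyticAt_phiDot d hS).fun_comp analyticAt_snd
  have hφ' : AnalyticAt ℂ (fun p : ℂ × ℂ => phiDDot d p.2) (0, u) :=
    (analyticAt_phiDDot d hS).fun_comp analyticAt_snd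
  have hD : (2 * Complex.sinh (u / 2)) ^ (2 * g) *
      (1 - Complex.exp (u * ((k : ℂ) + 2) + 0 * phiDot d u)) ≠ 0 := by
    simpa [hS, sub_eq_zero] using hW.symm
  unfold contourIntegrand
  fun_prop (disch := exact hD)

noncomputable def gtNumerator (α β : ℂ) (p : ℂ × ℂ) : ℂ :=
  Complex.exp (p.2 * α) - Complex.exp (p.2 * β)

noncomputable def ltNumerator (α β : ℂ) (k : ℕ) (d : ℤ) (p : ℂ × ℂ) : ℂ :=
  Complex.exp (p.2 * α) - Complex.exp (p.2 * (β + k + 2) + p.1 * phiDot d p.2)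

theorem analyticAt_gtNumerator (α β : ℂ) (p : ℂ × ℂ) : AnalyticAt ℂ (gtNumerator α β) p := by
  have hsnd : AnalyticAt ℂ (fun p : ℂ × ℂ => p.2) p := analyticAt_snd
  unfold gtNumerator
  fun_prop

theorem analyticAt_ltNumerator (α β : ℂ) (k : ℕ) (d : ℤ) {u : ℂ} (hS : Complex.sinh (u / 2) ≠ 0) :
    AnalyticAt ℂ (ltNumerator α β k d) (0, u) := by
  have hfst : AnalyticAt ℂ (fun p : ℂ × ℂ => p.1) (0, u) := analyticAt_fst
  have hsnd : AnalyticAt ℂ (fun p : ℂ × ℂ => p.2) (0, u) := analyticAt_snd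
  have hφ : AnalyticAt ℂ (fun p : ℂ × ℂ => phiDot d p.2) (0, u) :=
    (analyticAt_phiDot d hS).fun_comp analyticAt_snd
  unfold ltNumerator
  fun_prop

theorem deriv_contourIntegrand_sub (g k : ℕ) (d : ℤ) (α β γ : ℂ) {u : ℂ}
    (hS : Complex.sinh (u / 2) ≠ 0) (hW : Complex.exp (u * ((k : ℂ) + 2)) ≠ 1) :
    deriv (fun δ => contourIntegrand g k d γ (gtNumerator α β) (δ, u)) 0 -
      deriv (fun δ => contourIntegrand g k d γ (ltNumerator α β k d) (δ, u)) 0 =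
      -((g : ℂ) * (2 * (k : ℂ) + 4) ^ (g - 1)) *
        (Complex.exp (u * β) * Complex.exp (u * γ / 2) * phiDDot d u /
          (2 * Complex.sinh (u / 2)) ^ (2 * g)) := by
  have hdiff (N : ℂ × ℂ → ℂ) (hN : AnalyticAt ℂ N (0, u)) :
      DifferentiableAt ℂ (fun δ => contourIntegrand g k d γ N (δ, u)) 0 :=
    (hasDerivAt_fst_of_analyticAt (analyticAt_contourIntegrand g k d γ hN hS hW)).differentiableAt
  rw [← deriv_fun_sub (hdiff _ (analyticAt_gtNumerator α β _))
    (hdiff _ (analyticAt_ltNumerator α β k d hS))]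
  have hW' : ∀ᶠ δ in 𝓝 (0 : ℂ), 1 - Complex.exp (u * ((k : ℂ) + 2) + δ * phiDot d u) ≠ 0 :=
    (by fun_prop : Continuous fun δ : ℂ => 1 - Complex.exp (u * ((k : ℂ) + 2) + δ * phiDot d u))
      |>.continuousAt.eventually_ne (by simpa [sub_eq_zero] using hW.symm)
  have hsub : (fun δ => contourIntegrand g k d γ (gtNumerator α β) (δ, u) -
      contourIntegrand g k d γ (ltNumerator α β k d) (δ, u)) =ᶠ[𝓝 0]
      fun δ => -(Complex.exp (u * β) * Complex.exp (u * γ / 2) *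
        (2 * (k : ℂ) + 4 + δ * phiDDot d u) ^ g / (2 * Complex.sinh (u / 2)) ^ (2 * g)) := by
    filter_upwards [hW'] with δ hδ
    have hexp : Complex.exp (u * (β + k + 2) + δ * phiDot d u) =
        Complex.exp (u * β) * Complex.exp (u * ((k : ℂ) + 2) + δ * phiDot d u) := by
      rw [← Complex.exp_add]; ring_nf
    simp only [contourIntegrand, gtNumerator, ltNumerator, hexp]
    field_simp
    ring
  have hpow := (((hasDerivAt_id (0 : ℂ)).mul_const (phiDDot d u)).const_add
    (2 * (k : ℂ) + 4)).pow g
  rw [hsub.deriv_eq]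
  refine (((hpow.const_mul (Complex.exp (u * β) * Complex.exp (u * γ / 2))).div_const
    ((2 * Complex.sinh (u / 2)) ^ (2 * g))).neg).deriv.trans ?_
  simp only [id, zero_mul, add_zero]
  ring

theorem Rgt_eq_deriv_circleIntegral (g k : ℕ) (ν₁ ν₂ : ℤ) (ε : ℝ) (l m : ℤ) :
    Rgt g k ν₁ ν₂ ε l m = (-1 : ℂ) ^ g * deriv (fun δ => (2 * (Real.pi : ℂ) * Complex.I)⁻¹ *
      ∮ u in C(0, ε), contourIntegrand g k (ν₁ - ν₂) ((ν₁ : ℂ) + (ν₂ : ℂ))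
        (gtNumerator ((l : ℂ) + m + 1) ((l : ℂ) - m)) (δ, u)) 0 := rfl

theorem Rlt_eq_deriv_circleIntegral (g k : ℕ) (ν₁ ν₂ : ℤ) (ε : ℝ) (l m : ℤ) :
    Rlt g k ν₁ ν₂ ε l m = (-1 : ℂ) ^ g * deriv (fun δ => (2 * (Real.pi : ℂ) * Complex.I)⁻¹ *
      ∮ u in C(0, ε), contourIntegrand g k (ν₁ - ν₂) ((ν₁ : ℂ) + (ν₂ : ℂ))
        (ltNumerator ((l : ℂ) + m + 1) ((l : ℂ) - m) k (ν₁ - ν₂)) (δ, u)) 0 := rfl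

theorem stmt3_general (g k : ℕ) (ν₁ ν₂ : ℤ) (l m : ℤ) :
    ∃ ε₀ > (0 : ℝ), ∀ ε : ℝ, 0 < ε → ε < ε₀ →
      Rgt g k ν₁ ν₂ ε l m - Rlt g k ν₁ ν₂ ε l m
        = (g : ℂ) * (-(2 * (k : ℂ) + 4)) ^ (g - 1) *
            ((2 * (Real.pi : ℂ) * Complex.I)⁻¹ *
              ∮ u in C(0, ε),
                Complex.exp (u * ((l : ℂ) - (m : ℂ))) *
                    Complex.exp (u * ((ν₁ : ℂ) + (ν₂ : ℂ)) / 2) * phiDDot (ν₁ - ν₂) u /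
                  (2 * Complex.sinh (u / 2)) ^ (2 * g)) := by
  refine ⟨2 * Real.pi / ((k : ℝ) + 2), by positivity, fun ε hε hεk => ?_⟩
  have hsmall (u : ℂ) (hu : u ∈ sphere (0 : ℂ) ε) :
      Complex.sinh (u / 2) ≠ 0 ∧ Complex.exp (u * ((k : ℂ) + 2)) ≠ 1 := by
    refine sinh_half_ne_zero_and_exp_ne_one (ne_of_mem_sphere hu hε.ne') ?_
    rwa [mem_sphere_zero_iff_norm.1 hu, ← lt_div_iff₀ (by positivity)]
  have hF {N : ℂ × ℂ → ℂ} (hN : ∀ u, Complex.sinh (u / 2) ≠ 0 → AnalyticAt ℂ N (0, u))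
      (u : ℂ) (hu : u ∈ sphere (0 : ℂ) |ε|) :
      AnalyticAt ℂ (contourIntegrand g k (ν₁ - ν₂) ((ν₁ : ℂ) + (ν₂ : ℂ)) N) (0, u) := by
    rw [abs_of_pos hε] at hu
    obtain ⟨hS, hW⟩ := hsmall u hu
    exact analyticAt_contourIntegrand _ _ _ _ (hN u hS) hS hW
  have hGt := hF fun u _ => analyticAt_gtNumerator ((l : ℂ) + m + 1) ((l : ℂ) - m) (0, u)
  have hLt := hF fun u hu => analyticAt_ltNumerator ((l : ℂ) + m + 1) ((l : ℂ) - m) k (ν₁ - ν₂) hu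
  rw [Rgt_eq_deriv_circleIntegral, Rlt_eq_deriv_circleIntegral,
    ((hasDerivAt_circleIntegral_of_analyticAt hGt).const_mul _).deriv,
    ((hasDerivAt_circleIntegral_of_analyticAt hLt).const_mul _).deriv, ← mul_sub, ← mul_sub,
    ← circleIntegral.integral_sub (continuousOn_deriv_fst_of_analyticAt_sphere hGt).circleIntegrable'
      (continuousOn_deriv_fst_of_analyticAt_sphere hLt).circleIntegrable',
    circleIntegral.integral_congr hε.le fun u hu =>
      deriv_contourIntegrand_sub g k _ _ _ _ (hsmall u hu).1 (hsmall u hu).2,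
    circleIntegral.integral_const_mul]
  rcases g with _ | g
  · simp
  · simp only [neg_pow (2 * (k : ℂ) + 4), pow_succ, Nat.add_sub_cancel]
    ring

/-- `R_>^ν(k;λ,μ) − R_<^ν(k;λ,μ) = g·(−(2k+4))^{g−1}·
Res_{u=0}[e^{u(λ−μ)} e^{u(ν₁+ν₂)/2} φ̈(u)/(2sinh(u/2))^{2g}] du`; the residue is
extracted as the contour integral `(1/2πi)∮_{|u|=ε}` for small `ε`. -/
theorem stmt3 (g k : ℕ) (hg : 2 ≤ g) (hk : 0 < k) (ν₁ ν₂ : ℤ) (hν : ν₂ ≤ ν₁) (l m : ℤ) :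
    ∃ ε₀ > (0 : ℝ), ∀ ε : ℝ, 0 < ε → ε < ε₀ →
      Rgt g k ν₁ ν₂ ε l m - Rlt g k ν₁ ν₂ ε l m
        = (g : ℂ) * (-(2 * (k : ℂ) + 4)) ^ (g - 1) *
            ((2 * (Real.pi : ℂ) * Complex.I)⁻¹ *
              ∮ u in C(0, ε),
                Complex.exp (u * ((l : ℂ) - (m : ℂ))) *
                    Complex.exp (u * ((ν₁ : ℂ) + (ν₂ : ℂ)) / 2) * phiDDot (ν₁ - ν₂) u /
                  (2 * Complex.sinh (u / 2)) ^ (2 * g)) :=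
  stmt3_general g k ν₁ ν₂ l m
end

section
/- For the wall structure on V* = {a ∈ ℝ^r : Σaᵢ = 0}: two regular elements a, b ∈ V* satisfy [a]_B = [b]_B for every basis B ⊂ Φ of V* if and only if a and b lie in the same connected component (chamber) of the complement of the union of all hyperplanes S_{Π,l} = {c : Σ_{j∈Π'} c_j = l}, over nontrivial partitions Π = (Π',Π'') of {1,...,r} and integers l. -/
/-!
Both conditions say that `a` and `b` have the same floors `⌊Σ_{i∈P} aᵢ⌋` for every proper
nonempty `P`.

For the chambers: these partial sums are continuous and avoid the integers on the complement of
the walls, so by the intermediate value theorem their floors are constant on connected sets;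
conversely, fixing all the floors cuts out a convex, hence connected, set avoiding the walls.

For the lattice points: the edges of a basis `B ⊆ Φ` form a spanning tree, and the `j`-th
coordinate of `c ∈ V*` in `B` is the partial sum of `c` over one side of the cut of the `j`-th
edge. Hence `γ = [a]_B` iff `⌊Σ_P a⌋ = Σ_P γ` for all these cuts `P`, and every proper nonempty
`P` is such a cut for a suitable star-shaped tree.
-/

/-- The root `x_i - x_j` attached to an (oriented) edge `e = (i,j)`, as a vector in `ℝ^r`. -/
noncomputable def rootVec (r : ℕ) (e : Fin r × Fin r) : Fin r → ℝ :=
  fun i => (if i = e.1 then (1 : ℝ) else 0) - (if i = e.2 then (1 : ℝ) else 0)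

/-- The set of regular elements of `V* = {a : Σaᵢ = 0}`: the complement of the union
of all walls `S_{Π,l} = {c : Σ_{j∈Π'} c_j = l}` over nontrivial partitions
`Π = (Π',Π'')` and integers `l`. -/
def wallFree (r : ℕ) : Set (Fin r → ℝ) :=
  {c | (∑ i, c i) = 0 ∧
    ∀ P : Finset (Fin r), P.Nonempty → P ≠ Finset.univ → ∀ l : ℤ, ∑ i ∈ P, c i ≠ (l : ℝ)}

/-- `a − γ` lies in the half-open box `Σ_j [0,1)·β^{[j]}` spanned by the basis `E`;
for a basis `B` and regular `a` this says precisely that `γ = [a]_B`. -/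
def inBox (r : ℕ) (a : Fin r → ℝ) (γ : Fin r → ℤ) (E : Fin (r - 1) → Fin r × Fin r) : Prop :=
  ∃ t : Fin (r - 1) → ℝ, (∀ j, 0 ≤ t j ∧ t j < 1) ∧
    (fun i => a i - (γ i : ℝ)) = ∑ j, t j • rootVec r (E j)

open Finset

section Roots

variable {r : ℕ}

lemma sum_rootVec (P : Finset (Fin r)) (e : Fin r × Fin r) :
    ∑ i ∈ P, rootVec r e i = (if e.1 ∈ P then 1 else 0) - (if e.2 ∈ P then 1 else 0) := by
  simp [rootVec, sum_sub_distrib, sum_ite_eq']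

lemma sum_univ_rootVec (e : Fin r × Fin r) : ∑ i, rootVec r e i = 0 := by
  simp [sum_rootVec]

lemma rootVec_self (u : Fin r) : rootVec r (u, u) = 0 := by
  funext i; simp [rootVec]

lemma rootVec_add (u w v : Fin r) : rootVec r (u, w) + rootVec r (w, v) = rootVec r (u, v) := by
  funext i; simp only [rootVec, Pi.add_apply]; ring

lemma rootVec_swap (u v : Fin r) : rootVec r (v, u) = -rootVec r (u, v) := by
  funext i; simp only [rootVec, Pi.neg_apply]; ring

lemma mem_span_rootVec_of_sum_eq_zero {E : Fin (r - 1) → Fin r × Fin r}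
    (hli : LinearIndependent ℝ fun m => rootVec r (E m)) {v : Fin r → ℝ} (hv : ∑ i, v i = 0) :
    v ∈ Submodule.span ℝ (Set.range fun m => rootVec r (E m)) := by
  rcases r.eq_zero_or_pos with rfl | hr
  · rw [Subsingleton.elim v 0]; exact Submodule.zero_mem _
  let φ : (Fin r → ℝ) →ₗ[ℝ] ℝ := ∑ i, LinearMap.proj i
  have hφ : ∀ w, φ w = ∑ i, w i := fun w => by simp [φ]
  have hφ_range : LinearMap.range φ = ⊤ :=
    LinearMap.range_eq_top.mpr fun x => ⟨Pi.single ⟨0, hr⟩ x, by simp [hφ]⟩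
  have hker : Module.finrank ℝ (LinearMap.ker φ) = r - 1 := by
    have := LinearMap.finrank_range_add_finrank_ker φ
    rw [hφ_range, finrank_top, Module.finrank_self, Module.finrank_fin_fun] at this
    omega
  have hle : Submodule.span ℝ (Set.range fun m => rootVec r (E m)) ≤ LinearMap.ker φ := by
    rw [Submodule.span_le]
    rintro _ ⟨m, rfl⟩
    simp [hφ, sum_univ_rootVec]
  have hspan : Submodule.span ℝ (Set.range fun m => rootVec r (E m)) = LinearMap.ker φ :=
    Submodule.eq_of_le_of_finrank_eq hle (by rw [finrank_span_eq_card hli, hker, Fintype.card_fin])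
  rw [hspan, LinearMap.mem_ker, hφ, hv]

end Roots

section Cuts

variable {r : ℕ} {ι : Type*}

/-- `P` contains the tail but not the head of edge `j`, and both or neither endpoint of every
other edge. -/
def IsCut (E : ι → Fin r × Fin r) (j : ι) (P : Finset (Fin r)) : Prop :=
  ∑ i ∈ P, rootVec r (E j) i = 1 ∧ ∀ m ≠ j, ∑ i ∈ P, rootVec r (E m) i = 0

variable {E : ι → Fin r × Fin r} {j : ι} {P : Finset (Fin r)}

lemma IsCut.sum_apply_sum_smul [Fintype ι] (hP : IsCut E j P) (t : ι → ℝ) :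
    ∑ i ∈ P, (∑ m, t m • rootVec r (E m)) i = t j := by
  simp only [Finset.sum_apply, Pi.smul_apply, smul_eq_mul]
  rw [sum_comm, Fintype.sum_eq_single j fun m hm => by rw [← mul_sum, hP.2 m hm, mul_zero],
    ← mul_sum, hP.1, mul_one]

lemma IsCut.nonempty (hP : IsCut E j P) : P.Nonempty := by
  rw [nonempty_iff_ne_empty]
  rintro rfl
  simpa using hP.1

lemma IsCut.ne_univ (hP : IsCut E j P) : P ≠ univ := by
  rintro rfl
  simpa [sum_univ_rootVec] using hP.1

lemma IsCut.comp {κ : Type*} {e : κ → ι} (he : Function.Injective e) {k : κ}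
    (hP : IsCut E (e k) P) : IsCut (E ∘ e) k P :=
  ⟨hP.1, fun m hm => hP.2 (e m) (he.ne hm)⟩

lemma linearIndependent_of_forall_isCut [Fintype ι] (h : ∀ j, ∃ P, IsCut E j P) :
    LinearIndependent ℝ fun m => rootVec r (E m) := by
  refine Fintype.linearIndependent_iff.mpr fun t ht j => ?_
  obtain ⟨P, hP⟩ := h j
  have h0 := hP.sum_apply_sum_smul t
  rw [ht] at h0
  simpa using h0.symm

lemma rootVec_mem_span_of_reflTransGen {S : Set ι} {u v : Fin r}
    (h : Relation.ReflTransGen (fun x y => ∃ m ∈ S, E m = (x, y) ∨ E m = (y, x)) u v) :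
    rootVec r (u, v) ∈ Submodule.span ℝ ((fun m => rootVec r (E m)) '' S) := by
  induction h with
  | refl => rw [rootVec_self]; exact Submodule.zero_mem _
  | @tail w v _ hwv ih =>
    obtain ⟨m, hm, hE⟩ := hwv
    have hmem : rootVec r (E m) ∈ Submodule.span ℝ ((fun m => rootVec r (E m)) '' S) :=
      Submodule.subset_span ⟨m, hm, rfl⟩
    rw [← rootVec_add u w v]
    refine Submodule.add_mem _ ih ?_
    rcases hE with hE | hE <;> rw [hE] at hmem
    · exact hmem
    · rw [rootVec_swap]; exact Submodule.neg_mem _ hmem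

/-- Take the vertices reachable from the tail of `j` without using `j`; linear independence
keeps the head of `j` out. -/
lemma exists_isCut_of_linearIndependent (hli : LinearIndependent ℝ fun m => rootVec r (E m))
    (j : ι) : ∃ P, IsCut E j P := by
  classical
  let R : Fin r → Fin r → Prop := fun x y => ∃ m ∈ {m | m ≠ j}, E m = (x, y) ∨ E m = (y, x)
  let P := univ.filter (Relation.ReflTransGen R (E j).1)
  have htail : (E j).1 ∈ P := mem_filter.mpr ⟨mem_univ _, .refl⟩
  have hhead : (E j).2 ∉ P := fun h => hli.notMem_span_image (s := {m | m ≠ j}) (x := j)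
    (fun hj => hj rfl) (rootVec_mem_span_of_reflTransGen (mem_filter.mp h).2)
  have hother : ∀ m ≠ j, ((E m).1 ∈ P ↔ (E m).2 ∈ P) := fun m hm => by
    simp only [P, mem_filter, mem_univ, true_and]
    exact ⟨fun h => h.tail ⟨m, hm, Or.inl rfl⟩, fun h => h.tail ⟨m, hm, Or.inr rfl⟩⟩
  refine ⟨P, by simp [sum_rootVec, htail, hhead], fun m hm => ?_⟩
  rw [sum_rootVec, if_congr (hother m hm) rfl rfl, sub_self]

end Cuts

section Box

variable {r : ℕ} {E : Fin (r - 1) → Fin r × Fin r} {a : Fin r → ℝ} {γ : Fin r → ℤ}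

lemma floor_sum_eq_of_inBox (h : inBox r a γ E) {j : Fin (r - 1)} {P : Finset (Fin r)}
    (hP : IsCut E j P) : ⌊∑ i ∈ P, a i⌋ = ∑ i ∈ P, γ i := by
  obtain ⟨t, ht, hat⟩ := h
  have hcoord : ∑ i ∈ P, a i - ∑ i ∈ P, (γ i : ℝ) = t j := by
    rw [← sum_sub_distrib, ← hP.sum_apply_sum_smul t, ← hat]
  rw [Int.floor_eq_iff]
  push_cast
  constructor <;> linarith [ht j]

lemma inBox_of_forall_isCut (hli : LinearIndependent ℝ fun m => rootVec r (E m))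
    (ha : ∑ i, a i = 0) (hγ : ∑ i, γ i = 0)
    (h : ∀ j P, IsCut E j P → ⌊∑ i ∈ P, a i⌋ = ∑ i ∈ P, γ i) : inBox r a γ E := by
  have hsum : ∑ i, (a i - (γ i : ℝ)) = 0 := by
    rw [sum_sub_distrib, ha, ← Int.cast_sum, hγ, Int.cast_zero, sub_zero]
  obtain ⟨t, ht⟩ := (Submodule.mem_span_range_iff_exists_fun ℝ).mp
    (mem_span_rootVec_of_sum_eq_zero hli hsum)
  refine ⟨t, fun j => ?_, ht.symm⟩
  obtain ⟨P, hP⟩ := exists_isCut_of_linearIndependent hli j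
  have hcoord : ∑ i ∈ P, a i - ∑ i ∈ P, (γ i : ℝ) = t j := by
    rw [← sum_sub_distrib, ← hP.sum_apply_sum_smul t, ht]
  have hfl := Int.floor_eq_iff.mp (h j P hP)
  push_cast at hfl
  constructor <;> linarith [hfl.1, hfl.2]

/-- `[a]_B` is obtained by rounding the coordinates of `a` in the basis down. -/
lemma exists_inBox (hli : LinearIndependent ℝ fun m => rootVec r (E m)) (ha : ∑ i, a i = 0) :
    ∃ γ : Fin r → ℤ, ∑ i, γ i = 0 ∧ inBox r a γ E := by
  obtain ⟨t, ht⟩ := (Submodule.mem_span_range_iff_exists_fun ℝ).mp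
    (mem_span_rootVec_of_sum_eq_zero hli ha)
  let γ : Fin r → ℤ := fun i =>
    ∑ j, ⌊t j⌋ * ((if i = (E j).1 then 1 else 0) - (if i = (E j).2 then 1 else 0))
  have hγ : ∀ i, (γ i : ℝ) = ∑ j, (⌊t j⌋ : ℝ) * rootVec r (E j) i := fun i => by
    simp [γ, rootVec]
  have hγsum : ∑ i, γ i = 0 := by
    rw [sum_comm]
    exact sum_eq_zero fun j _ => by simp [← mul_sum, sum_sub_distrib]
  refine ⟨γ, hγsum, fun j => Int.fract (t j), fun j => ⟨Int.fract_nonneg _, Int.fract_lt_one _⟩, ?_⟩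
  funext i
  simp only [hγ, ← ht, Finset.sum_apply, Pi.smul_apply, smul_eq_mul, ← sum_sub_distrib,
    ← sub_mul, Int.self_sub_floor]

end Box

section Tree

variable {r : ℕ}

/-- Take `p ∈ P` and `q ∉ P`, and the tree with edges `p → q`, `i → p` for the other `i ∈ P`
and `i → q` for the other `i ∉ P`; removing the edge `p → q` leaves the components `P` and `Pᶜ`. -/
lemma exists_basis_isCut {P : Finset (Fin r)} (hP : P.Nonempty) (hPu : P ≠ univ) :
    ∃ E : Fin (r - 1) → Fin r × Fin r, (∀ m, (E m).1 ≠ (E m).2) ∧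
      (LinearIndependent ℝ fun m => rootVec r (E m)) ∧ ∃ j, IsCut E j P := by
  classical
  obtain ⟨p, hp⟩ := hP
  obtain ⟨q, hq⟩ : ∃ q, q ∉ P := by simpa [eq_univ_iff_forall] using hPu
  have hpq : p ≠ q := fun h => hq (h ▸ hp)
  let parent : Fin r → Fin r := fun i => if i ∈ P ∧ i ≠ p then p else q
  let E' : {i // i ≠ q} → Fin r × Fin r := fun i => (i, parent i)
  have hcut : ∀ i, IsCut E' i (if i.1 = p then P else {i.1}) := by
    rintro ⟨i, hiq⟩
    by_cases hip : i = p
    · subst hip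
      refine ⟨by simp [E', sum_rootVec, parent, hp, hq], fun ⟨m, hmq⟩ hm => ?_⟩
      have hmi : m ≠ i := fun h => hm (Subtype.ext h)
      by_cases hmP : m ∈ P <;> simp [E', sum_rootVec, parent, hp, hq, hmP, hmi]
    · have hparent : ∀ m, parent m ≠ i := fun m => by
        simp only [parent]; split_ifs <;> exact Ne.symm ‹_›
      refine ⟨by simp [E', rootVec, hip, hparent], fun ⟨m, hmq⟩ hm => ?_⟩
      have hmi : m ≠ i := fun h => hm (Subtype.ext h)
      simp [E', rootVec, hip, hparent, hmi]
  have hcard : Fintype.card {i // i ≠ q} = r - 1 := by simp [Fintype.card_subtype_compl]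
  let e := (Fintype.equivFinOfCardEq hcard).symm
  have hloop : ∀ i : {i // i ≠ q}, i.1 ≠ parent i := fun ⟨i, hiq⟩ => by
    simp only [parent]; split_ifs with h; exacts [h.2, hiq]
  have hcut_p : IsCut E' (e (e.symm ⟨p, hpq⟩)) P := by
    simpa using hcut ⟨p, hpq⟩
  exact ⟨E' ∘ e, fun m => hloop (e m),
    linearIndependent_of_forall_isCut fun m => ⟨_, (hcut (e m)).comp e.injective⟩,
    _, hcut_p.comp e.injective⟩

end Tree

lemma IsPreconnected.floor_eq_of_forall_ne_intCast {X : Type*} [TopologicalSpace X] {K : Set X}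
    (hK : IsPreconnected K) {f : X → ℝ} (hf : ContinuousOn f K)
    (hint : ∀ x ∈ K, ∀ l : ℤ, f x ≠ l) {x y : X} (hx : x ∈ K) (hy : y ∈ K) :
    ⌊f x⌋ = ⌊f y⌋ := by
  have hle : ∀ x ∈ K, ∀ y ∈ K, ⌊f x⌋ ≤ ⌊f y⌋ := by
    intro x hx y hy
    by_contra! hlt
    obtain ⟨c, hc, hfc⟩ :=
      hK.intermediate_value hy hx hf ⟨(Int.floor_lt.mp hlt).le, Int.floor_le _⟩
    exact hint c hc _ hfc
  exact le_antisymm (hle x hx y hy) (hle y hy x hx)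

section Chambers

/-- For regular `a` and `b`: for every nontrivial partition `Π`, they lie between the same two
consecutive walls `S_{Π,l}` and `S_{Π,l+1}`. -/
def SamePartialSumFloors (r : ℕ) (a b : Fin r → ℝ) : Prop :=
  ∀ P : Finset (Fin r), P.Nonempty → P ≠ univ → ⌊∑ i ∈ P, a i⌋ = ⌊∑ i ∈ P, b i⌋

variable {r : ℕ} {a b : Fin r → ℝ}

lemma SamePartialSumFloors.symm (h : SamePartialSumFloors r a b) : SamePartialSumFloors r b a :=
  fun P hP hPu => (h P hP hPu).symm

lemma samePartialSumFloors_of_mem_connectedComponentIn (ha : a ∈ wallFree r)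
    (hb : b ∈ connectedComponentIn (wallFree r) a) : SamePartialSumFloors r a b :=
  fun P hP hPu => isPreconnected_connectedComponentIn.floor_eq_of_forall_ne_intCast
    (continuous_finsetSum P fun i _ => continuous_apply i).continuousOn
    (fun _ hc => (connectedComponentIn_subset _ _ hc).2 P hP hPu) (mem_connectedComponentIn ha) hb

lemma mem_connectedComponentIn_of_samePartialSumFloors (ha : a ∈ wallFree r)
    (hb : b ∈ wallFree r) (h : SamePartialSumFloors r a b) :
    b ∈ connectedComponentIn (wallFree r) a := by
  let cell : Set (Fin r → ℝ) := {c | ∑ i, c i = 0 ∧ ∀ P : Finset (Fin r), P.Nonempty → P ≠ univ →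
    ∑ i ∈ P, c i ∈ Set.Ioo (⌊∑ i ∈ P, a i⌋ : ℝ) (⌊∑ i ∈ P, a i⌋ + 1)}
  have hmem : ∀ c ∈ wallFree r, SamePartialSumFloors r a c → c ∈ cell := by
    intro c hc hac
    refine ⟨hc.1, fun P hP hPu => ?_⟩
    rw [hac P hP hPu]
    exact ⟨(Int.floor_le _).lt_of_ne (hc.2 P hP hPu _).symm, Int.lt_floor_add_one _⟩
  have hsub : cell ⊆ wallFree r := by
    refine fun c hc => ⟨hc.1, fun P hP hPu l hl => ?_⟩
    obtain ⟨h1, h2⟩ := hc.2 P hP hPu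
    rw [hl] at h1 h2
    norm_cast at h1 h2
    omega
  have hconv : Convex ℝ cell := by
    intro x hx y hy θ μ hθ hμ hθμ
    have hlin : ∀ P : Finset (Fin r),
        ∑ i ∈ P, (θ • x + μ • y) i = θ * ∑ i ∈ P, x i + μ * ∑ i ∈ P, y i := fun P => by
      simp [sum_add_distrib, mul_sum]
    refine ⟨by rw [hlin, hx.1, hy.1]; ring, fun P hP hPu => ?_⟩
    rw [hlin]
    exact convex_Ioo _ _ (hx.2 P hP hPu) (hy.2 P hP hPu) hθ hμ hθμ
  exact hconv.isPreconnected.subset_connectedComponentIn (hmem a ha fun _ _ _ => rfl) hsub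
    (hmem b hb h)

lemma samePartialSumFloors_of_forall_inBox_iff (ha : ∑ i, a i = 0)
    (H : ∀ E : Fin (r - 1) → Fin r × Fin r, (∀ m, (E m).1 ≠ (E m).2) →
      LinearIndependent ℝ (fun m => rootVec r (E m)) →
      ∀ γ : Fin r → ℤ, (∑ i, γ i) = 0 → (inBox r a γ E ↔ inBox r b γ E)) :
    SamePartialSumFloors r a b := by
  intro P hP hPu
  obtain ⟨E, hE, hli, j, hj⟩ := exists_basis_isCut hP hPu
  obtain ⟨γ, hγ, haγ⟩ := exists_inBox hli ha
  rw [floor_sum_eq_of_inBox haγ hj, floor_sum_eq_of_inBox ((H E hE hli γ hγ).mp haγ) hj]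

lemma SamePartialSumFloors.inBox (h : SamePartialSumFloors r a b) {E : Fin (r - 1) → Fin r × Fin r}
    (hli : LinearIndependent ℝ fun m => rootVec r (E m)) (hb : ∑ i, b i = 0) {γ : Fin r → ℤ}
    (hγ : ∑ i, γ i = 0) (ha : inBox r a γ E) : inBox r b γ E :=
  inBox_of_forall_isCut hli hb hγ fun _ _ hP =>
    (h _ hP.nonempty hP.ne_univ).symm.trans (floor_sum_eq_of_inBox ha hP)

end Chambers

theorem stmt12_general (r : ℕ) (a b : Fin r → ℝ)
    (ha : a ∈ wallFree r) (hb : b ∈ wallFree r) :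
    (∀ E : Fin (r - 1) → Fin r × Fin r, (∀ m, (E m).1 ≠ (E m).2) →
        LinearIndependent ℝ (fun m => rootVec r (E m)) →
        ∀ γ : Fin r → ℤ, (∑ i, γ i) = 0 → (inBox r a γ E ↔ inBox r b γ E))
    ↔ b ∈ connectedComponentIn (wallFree r) a := by
  constructor
  · intro H
    exact mem_connectedComponentIn_of_samePartialSumFloors ha hb
      (samePartialSumFloors_of_forall_inBox_iff ha.1 H)
  · intro hab E _ hli γ hγ
    have h := samePartialSumFloors_of_mem_connectedComponentIn ha hab
    exact ⟨h.inBox hli hb.1 hγ, h.symm.inBox hli ha.1 hγ⟩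

/-- two regular elements `a, b ∈ V*` satisfy `[a]_B = [b]_B` for every
basis `B ⊆ Φ` of `V*` if and only if `a` and `b` lie in the same connected component
(chamber) of the complement of the union of all walls `S_{Π,l}`. -/
theorem stmt12 (r : ℕ) (hr : 2 ≤ r) (a b : Fin r → ℝ)
    (ha : a ∈ wallFree r) (hb : b ∈ wallFree r) :
    (∀ E : Fin (r - 1) → Fin r × Fin r, (∀ m, (E m).1 ≠ (E m).2) →
        LinearIndependent ℝ (fun m => rootVec r (E m)) →
        ∀ γ : Fin r → ℤ, (∑ i, γ i) = 0 → (inBox r a γ E ↔ inBox r b γ E))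
    ↔ b ∈ connectedComponentIn (wallFree r) a :=
  stmt12_general r a b ha hb
end

section
/- Serre-duality antisymmetry for the rank-2 residue polynomial: R_>^ν(k;λ,μ) = −R_>^ν(k; −λ+k+1−(ν₁+ν₂), μ) − (−(2k+4))^g · Res_{u=0} [ (e^{u(λ+μ+1)} − e^{u(λ−μ)}) e^{u(ν₁+ν₂)/2} φ̇(u) / ((2sinh(u/2))^{2g}(1 − e^{u(k+2)})) ] du. -/
open Complex

/-!
Differentiating under the integral sign, `R_>^ν(k;λ,μ)` is `(-1)^g` times the contour integral
of `∂_δ F_λ(0, u)`, where `F_λ(δ, u)` is the integrand of `Rgt`. Put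
`λ' = -λ + k + 1 - (ν₁ + ν₂)` and `w_λ(u) = (e^{u(λ+μ+1)} - e^{u(λ-μ)}) e^{u(ν₁+ν₂)/2}`.
Since `w_λ'(-u) = -e^{-u(k+2)} w_λ(u)`, `φ̈` is even and `φ̇` is odd, the substitution `u ↦ -u`
gives the exact identity `F_λ'(δ, -u) = e^{δ φ̇(u)} F_λ(δ, u)`. Differentiating it at `δ = 0`
gives `∂_δ F_λ'(0, -u) = ∂_δ F_λ(0, u) + φ̇(u) F_λ(0, u)`, and `u ↦ -u` reverses the sign of a
circle integral centred at `0`; the term `φ̇ F_λ(0, ·)` is the residue term of the statement.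
-/

open Metric

theorem Function.Even.deriv {𝕜 F : Type*} [NontriviallyNormedField 𝕜] [NormedAddCommGroup F]
    [NormedSpace 𝕜 F] {f : 𝕜 → F} (hf : f.Even) : (deriv f).Odd := fun x => by
  conv_lhs => rw [← funext hf]
  rw [deriv_comp_neg, neg_neg]

theorem Function.Odd.deriv {𝕜 F : Type*} [NontriviallyNormedField 𝕜] [NormedAddCommGroup F]
    [NormedSpace 𝕜 F] {f : 𝕜 → F} (hf : f.Odd) : (deriv f).Even := fun x => by
  have hf' : f = fun y => -f (-y) := funext fun y => by rw [hf, neg_neg]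
  conv_lhs => rw [hf']
  rw [deriv.fun_neg, deriv_comp_neg, neg_neg, neg_neg]

theorem Complex.exp_ne_one_of_norm_lt_s16 {w : ℂ} (hw : w ≠ 0) (h : ‖w‖ < 2 * Real.pi) : exp w ≠ 1 := by
  rw [Ne, exp_eq_one_iff]
  rintro ⟨n, rfl⟩
  have hn : n ≠ 0 := by rintro rfl; simp at hw
  have : (1 : ℝ) ≤ |(n : ℝ)| := by exact_mod_cast Int.one_le_abs hn
  simp [abs_of_pos Real.pi_pos] at h
  nlinarith [Real.pi_pos]

theorem Complex.sinh_half_ne_zero_of_exp_ne_one {u : ℂ} (h : exp u ≠ 1) : sinh (u / 2) ≠ 0 := by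
  contrapose! h
  have : exp u - 1 = 2 * sinh (u / 2) * exp (u / 2) := by
    rw [Complex.sinh]
    field_simp
    rw [mul_sub, ← exp_add, ← exp_add, add_halves, add_neg_cancel, exp_zero]
  rw [h] at this
  linear_combination this

theorem circleIntegral.integral_comp_neg {E : Type*} [NormedAddCommGroup E] [NormedSpace ℂ E]
    (f : ℂ → E) (R : ℝ) :
    (∮ z in C(0, R), f (-z)) = -∮ z in C(0, R), f z := by
  have hshift (θ : ℝ) : circleMap 0 R (θ + Real.pi) = -circleMap 0 R θ := by
    simp [circleMap, add_mul, Complex.exp_add]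
  have hper : Function.Periodic
      (fun θ => deriv (circleMap 0 R) θ • f (circleMap 0 R θ)) (2 * Real.pi) := by
    intro θ; simp [periodic_circleMap 0 R θ]
  calc (∮ z in C(0, R), f (-z))
      = ∫ θ in (0)..2 * Real.pi, -(deriv (circleMap 0 R) (θ + Real.pi) •
          f (circleMap 0 R (θ + Real.pi))) := by
        refine intervalIntegral.integral_congr fun θ _ => ?_
        simp [deriv_circleMap, hshift]
    _ = -∮ z in C(0, R), f z := by
        rw [intervalIntegral.integral_neg, intervalIntegral.integral_comp_add_right
          (fun θ => deriv (circleMap 0 R) θ • f (circleMap 0 R θ)), zero_add,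
          add_comm (2 * Real.pi), hper.intervalIntegral_add_eq Real.pi 0, zero_add]
        rfl

theorem circleIntegral.hasDerivAt_integral_of_continuousOn {E : Type*} [NormedAddCommGroup E]
    [NormedSpace ℂ E] {F F' : ℂ → ℂ → E} {U : Set (ℂ × ℂ)} {x₀ c : ℂ} {R : ℝ}
    (hU : IsOpen U) (hsub : {x₀} ×ˢ sphere c |R| ⊆ U)
    (hF : ContinuousOn (Function.uncurry F) U) (hF' : ContinuousOn (Function.uncurry F') U)
    (hderiv : ∀ p ∈ U, HasDerivAt (F · p.2) (F' p.1 p.2) p.1) :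
    HasDerivAt (fun x => ∮ z in C(c, R), F x z) (∮ z in C(c, R), F' x₀ z) x₀ := by
  -- a tube `closedBall x₀ (r / 2) ×ˢ sphere c |R| ⊆ U` is compact, so `F'` is bounded on it
  obtain ⟨V, W, hVo, -, hx₀V, hW, hVW⟩ :=
    generalized_tube_lemma isCompact_singleton (isCompact_sphere c |R|) hU hsub
  obtain ⟨r, hr, hrV⟩ := isOpen_iff.mp hVo x₀ (hx₀V rfl)
  set K := closedBall x₀ (r / 2) ×ˢ sphere c |R|
  have hKU : K ⊆ U := fun p hp =>
    hVW ⟨hrV (closedBall_subset_ball (half_lt_self hr) hp.1), hW hp.2⟩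
  obtain ⟨C, hC⟩ := ((isCompact_closedBall _ _).prod
    (isCompact_sphere _ _)).exists_bound_of_continuousOn (hF'.mono hKU)
  have hmemK {x : ℂ} (hx : x ∈ closedBall x₀ (r / 2)) (θ : ℝ) : (x, circleMap c R θ) ∈ K :=
    ⟨hx, circleMap_mem_sphere' c R θ⟩
  have hcont {G : ℂ → ℂ → E} (hG : ContinuousOn (Function.uncurry G) U) {x : ℂ}
      (hx : x ∈ closedBall x₀ (r / 2)) :
      Continuous fun θ => deriv (circleMap c R) θ • G x (circleMap c R θ) := by
    simp only [deriv_circleMap]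
    exact ((continuous_circleMap 0 R).mul continuous_const).smul <|
      hG.comp_continuous (continuous_const.prodMk (continuous_circleMap c R))
        fun θ => hKU (hmemK hx θ)
  have hx₀ : x₀ ∈ closedBall x₀ (r / 2) := mem_closedBall_self (by linarith)
  refine (intervalIntegral.hasDerivAt_integral_of_dominated_loc_of_deriv_le
    (F := fun x θ => deriv (circleMap c R) θ • F x (circleMap c R θ))
    (F' := fun x θ => deriv (circleMap c R) θ • F' x (circleMap c R θ))
    (bound := fun _ => |R| * C) (ball_mem_nhds x₀ (half_pos hr)) ?_
    ((hcont hF hx₀).intervalIntegrable _ _) (hcont hF' hx₀).aestronglyMeasurable ?_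
    intervalIntegrable_const ?_).2
  · filter_upwards [ball_mem_nhds x₀ (half_pos hr)] with x hx
    exact (hcont hF (ball_subset_closedBall hx)).aestronglyMeasurable
  · refine MeasureTheory.ae_of_all _ fun θ _ x hx => ?_
    simp only [deriv_circleMap, norm_smul, norm_mul, norm_circleMap_zero, norm_I, mul_one]
    exact mul_le_mul_of_nonneg_left (hC _ (hmemK (ball_subset_closedBall hx) θ)) (abs_nonneg R)
  · exact MeasureTheory.ae_of_all _ fun θ _ x hx =>
      (hderiv _ (hKU (hmemK (ball_subset_closedBall hx) θ))).const_smul _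

theorem phiC_even (d : ℤ) : (phiC d).Even := fun u => by
  simp only [phiC, mul_neg, neg_div, Complex.sinh_neg, div_neg, neg_neg]

theorem phiDot_odd (d : ℤ) : (phiDot d).Odd := fun u => by
  simp only [phiDot, (phiC_even d).deriv u, mul_neg]

theorem phiDDot_even (d : ℤ) : (phiDDot d).Even := fun u => by
  simp only [phiDDot, (phiDot_odd d).deriv u]

theorem isOpen_sinh_half_ne_zero : IsOpen {u : ℂ | Complex.sinh (u / 2) ≠ 0} :=
  isOpen_ne_fun (by fun_prop) continuous_const

theorem differentiableOn_phiC (d : ℤ) :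
    DifferentiableOn ℂ (phiC d) {u | Complex.sinh (u / 2) ≠ 0} :=
  DifferentiableOn.div (by fun_prop) (by fun_prop) fun _ hu => hu

theorem differentiableOn_phiDot (d : ℤ) :
    DifferentiableOn ℂ (phiDot d) {u | Complex.sinh (u / 2) ≠ 0} :=
  ((differentiableOn_phiC d).deriv isOpen_sinh_half_ne_zero).const_mul 2

theorem differentiableOn_phiDDot (d : ℤ) :
    DifferentiableOn ℂ (phiDDot d) {u | Complex.sinh (u / 2) ≠ 0} :=
  ((differentiableOn_phiDot d).deriv isOpen_sinh_half_ne_zero).const_mul 2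

noncomputable def rgtWeight (ν₁ ν₂ l m : ℤ) (u : ℂ) : ℂ :=
  (Complex.exp (u * ((l : ℂ) + (m : ℂ) + 1)) - Complex.exp (u * ((l : ℂ) - (m : ℂ)))) *
    Complex.exp (u * ((ν₁ : ℂ) + (ν₂ : ℂ)) / 2)

noncomputable def rgtIntegrand (g k : ℕ) (ν₁ ν₂ l m : ℤ) (δ u : ℂ) : ℂ :=
  rgtWeight ν₁ ν₂ l m u * (2 * (k : ℂ) + 4 + δ * phiDDot (ν₁ - ν₂) u) ^ g /
    ((2 * Complex.sinh (u / 2)) ^ (2 * g) *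
      (1 - Complex.exp (u * ((k : ℂ) + 2) + δ * phiDot (ν₁ - ν₂) u)))

noncomputable def rgtIntegrandDeriv (g k : ℕ) (ν₁ ν₂ l m : ℤ) (δ u : ℂ) : ℂ :=
  rgtWeight ν₁ ν₂ l m u *
    (g * (2 * (k : ℂ) + 4 + δ * phiDDot (ν₁ - ν₂) u) ^ (g - 1) * phiDDot (ν₁ - ν₂) u *
        (1 - Complex.exp (u * ((k : ℂ) + 2) + δ * phiDot (ν₁ - ν₂) u)) +
      (2 * (k : ℂ) + 4 + δ * phiDDot (ν₁ - ν₂) u) ^ g *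
        Complex.exp (u * ((k : ℂ) + 2) + δ * phiDot (ν₁ - ν₂) u) * phiDot (ν₁ - ν₂) u) /
    ((2 * Complex.sinh (u / 2)) ^ (2 * g) *
      (1 - Complex.exp (u * ((k : ℂ) + 2) + δ * phiDot (ν₁ - ν₂) u)) ^ 2)

def rgtDomain (k : ℕ) (d : ℤ) : Set (ℂ × ℂ) :=
  {p | Complex.sinh (p.2 / 2) ≠ 0 ∧ Complex.exp (p.2 * ((k : ℂ) + 2) + p.1 * phiDot d p.2) ≠ 1}

theorem rgtWeight_reflect (k : ℕ) (ν₁ ν₂ l m : ℤ) (u : ℂ) :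
    rgtWeight ν₁ ν₂ (-l + k + 1 - (ν₁ + ν₂)) m (-u) =
      -Complex.exp (-(u * ((k : ℂ) + 2))) * rgtWeight ν₁ ν₂ l m u := by
  simp only [rgtWeight, sub_mul, mul_sub, neg_mul, ← Complex.exp_add, sub_neg_eq_add,
    neg_add_eq_sub]
  congr 2 <;> push_cast <;> ring

theorem rgtIntegrand_reflect (g k : ℕ) (ν₁ ν₂ l m : ℤ) (δ u : ℂ) :
    rgtIntegrand g k ν₁ ν₂ (-l + k + 1 - (ν₁ + ν₂)) m δ (-u) =
      Complex.exp (δ * phiDot (ν₁ - ν₂) u) * rgtIntegrand g k ν₁ ν₂ l m δ u := by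
  simp only [rgtIntegrand, rgtWeight_reflect, phiDDot_even _ u, phiDot_odd _ u, neg_div,
    Complex.sinh_neg, mul_neg, neg_mul, neg_pow, Even.neg_one_pow (even_two_mul g), one_mul]
  rw [← neg_add, Complex.exp_neg, Complex.exp_neg, Complex.exp_add]
  have ha := Complex.exp_ne_zero (u * ((k : ℂ) + 2))
  have ht := Complex.exp_ne_zero (δ * phiDot (ν₁ - ν₂) u)
  generalize Complex.exp (u * ((k : ℂ) + 2)) = a at *
  generalize Complex.exp (δ * phiDot (ν₁ - ν₂) u) = t at *
  rcases eq_or_ne (a * t) 1 with hpole | hpole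
  · -- at a pole both sides are `0`, by the convention `x / 0 = 0`
    simp [hpole]
  · have : 1 - a * t ≠ 0 := sub_ne_zero.mpr (Ne.symm hpole)
    field_simp
    ring

theorem continuousOn_phiDot_snd (d : ℤ) :
    ContinuousOn (fun p : ℂ × ℂ => phiDot d p.2) {p | Complex.sinh (p.2 / 2) ≠ 0} :=
  (differentiableOn_phiDot d).continuousOn.comp continuous_snd.continuousOn fun _ hp => hp

theorem continuousOn_phiDDot_snd (d : ℤ) :
    ContinuousOn (fun p : ℂ × ℂ => phiDDot d p.2) {p | Complex.sinh (p.2 / 2) ≠ 0} :=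
  (differentiableOn_phiDDot d).continuousOn.comp continuous_snd.continuousOn fun _ hp => hp

theorem isOpen_rgtDomain (k : ℕ) (d : ℤ) : IsOpen (rgtDomain k d) :=
  have := continuousOn_phiDot_snd d
  ContinuousOn.isOpen_inter_preimage (by fun_prop)
    (isOpen_sinh_half_ne_zero.preimage continuous_snd) isOpen_compl_singleton

theorem continuousOn_rgtIntegrand (g k : ℕ) (ν₁ ν₂ l m : ℤ) :
    ContinuousOn (Function.uncurry (rgtIntegrand g k ν₁ ν₂ l m)) (rgtDomain k (ν₁ - ν₂)) := by
  have := (continuousOn_phiDot_snd (ν₁ - ν₂)).mono (t := rgtDomain k (ν₁ - ν₂)) fun _ hp => hp.1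
  have := (continuousOn_phiDDot_snd (ν₁ - ν₂)).mono (t := rgtDomain k (ν₁ - ν₂)) fun _ hp => hp.1
  have hden : ∀ p ∈ rgtDomain k (ν₁ - ν₂), (2 * Complex.sinh (p.2 / 2)) ^ (2 * g) *
      (1 - Complex.exp (p.2 * ((k : ℂ) + 2) + p.1 * phiDot (ν₁ - ν₂) p.2)) ≠ 0 := fun p hp =>
    mul_ne_zero (pow_ne_zero _ (mul_ne_zero two_ne_zero hp.1)) (sub_ne_zero.mpr (Ne.symm hp.2))
  unfold rgtIntegrand rgtWeight Function.uncurry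
  fun_prop (disch := exact hden)

theorem continuousOn_rgtIntegrandDeriv (g k : ℕ) (ν₁ ν₂ l m : ℤ) :
    ContinuousOn (Function.uncurry (rgtIntegrandDeriv g k ν₁ ν₂ l m)) (rgtDomain k (ν₁ - ν₂)) := by
  have := (continuousOn_phiDot_snd (ν₁ - ν₂)).mono (t := rgtDomain k (ν₁ - ν₂)) fun _ hp => hp.1
  have := (continuousOn_phiDDot_snd (ν₁ - ν₂)).mono (t := rgtDomain k (ν₁ - ν₂)) fun _ hp => hp.1
  have hden : ∀ p ∈ rgtDomain k (ν₁ - ν₂), (2 * Complex.sinh (p.2 / 2)) ^ (2 * g) *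
      (1 - Complex.exp (p.2 * ((k : ℂ) + 2) + p.1 * phiDot (ν₁ - ν₂) p.2)) ^ 2 ≠ 0 := fun p hp =>
    mul_ne_zero (pow_ne_zero _ (mul_ne_zero two_ne_zero hp.1))
      (pow_ne_zero _ (sub_ne_zero.mpr (Ne.symm hp.2)))
  unfold rgtIntegrandDeriv rgtWeight Function.uncurry
  fun_prop (disch := exact hden)

theorem hasDerivAt_rgtIntegrand (g k : ℕ) (ν₁ ν₂ l m : ℤ) {δ u : ℂ}
    (h : (δ, u) ∈ rgtDomain k (ν₁ - ν₂)) :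
    HasDerivAt (rgtIntegrand g k ν₁ ν₂ l m · u) (rgtIntegrandDeriv g k ν₁ ν₂ l m δ u) δ := by
  have hS : (2 * Complex.sinh (u / 2)) ^ (2 * g) ≠ 0 := pow_ne_zero _ (mul_ne_zero two_ne_zero h.1)
  have hE : 1 - Complex.exp (u * ((k : ℂ) + 2) + δ * phiDot (ν₁ - ν₂) u) ≠ 0 :=
    sub_ne_zero.mpr (Ne.symm h.2)
  have hnum := ((((hasDerivAt_id δ).mul_const (phiDDot (ν₁ - ν₂) u)).const_add
    (2 * (k : ℂ) + 4)).fun_pow g).const_mul (rgtWeight ν₁ ν₂ l m u)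
  have hden := (((((hasDerivAt_id δ).mul_const (phiDot (ν₁ - ν₂) u)).const_add
    (u * ((k : ℂ) + 2))).cexp).const_sub 1).const_mul ((2 * Complex.sinh (u / 2)) ^ (2 * g))
  refine (hnum.div hden (mul_ne_zero hS hE)).congr_deriv ?_
  simp only [rgtIntegrandDeriv, id]
  field_simp
  ring

theorem zero_mem_rgtDomain {k : ℕ} {u : ℂ} (hu₀ : u ≠ 0) (hu : ‖u‖ * ((k : ℝ) + 2) < 1)
    (d : ℤ) : ((0 : ℂ), u) ∈ rgtDomain k d := by
  have hk : ‖(k : ℂ) + 2‖ = (k : ℝ) + 2 := by exact_mod_cast Complex.norm_natCast (k + 2)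
  have h2π : 1 < 2 * Real.pi := by linarith [Real.pi_gt_three]
  refine ⟨sinh_half_ne_zero_of_exp_ne_one (exp_ne_one_of_norm_lt_s16 hu₀ ?_), ?_⟩
  · nlinarith [norm_nonneg u, (k.cast_nonneg : (0 : ℝ) ≤ k)]
  · rw [zero_mul, add_zero]
    refine exp_ne_one_of_norm_lt_s16 (mul_ne_zero hu₀ ?_) ?_
    · rw [← norm_ne_zero_iff, hk]; positivity
    · rw [norm_mul, hk]; linarith

section Reflection

variable {g k : ℕ} {ν₁ ν₂ : ℤ} {ε : ℝ}

theorem Rgt_eq_circleIntegral_rgtIntegrandDeriv (hε : 0 ≤ ε)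
    (hsub : {0} ×ˢ sphere (0 : ℂ) ε ⊆ rgtDomain k (ν₁ - ν₂)) (l m : ℤ) :
    Rgt g k ν₁ ν₂ ε l m = (-1 : ℂ) ^ g * ((2 * (Real.pi : ℂ) * Complex.I)⁻¹ *
      ∮ u in C(0, ε), rgtIntegrandDeriv g k ν₁ ν₂ l m 0 u) := by
  rw [← abs_of_nonneg hε] at hsub
  have h := circleIntegral.hasDerivAt_integral_of_continuousOn (isOpen_rgtDomain k _) hsub
    (continuousOn_rgtIntegrand g k ν₁ ν₂ l m) (continuousOn_rgtIntegrandDeriv g k ν₁ ν₂ l m)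
    fun p hp => hasDerivAt_rgtIntegrand g k ν₁ ν₂ l m hp
  exact congrArg _ (h.const_mul _).deriv

theorem rgtIntegrandDeriv_reflect (l m : ℤ) {u : ℂ} (hu : ((0 : ℂ), u) ∈ rgtDomain k (ν₁ - ν₂))
    (hu' : ((0 : ℂ), -u) ∈ rgtDomain k (ν₁ - ν₂)) :
    rgtIntegrandDeriv g k ν₁ ν₂ (-l + k + 1 - (ν₁ + ν₂)) m 0 (-u) =
      rgtIntegrandDeriv g k ν₁ ν₂ l m 0 u +
        phiDot (ν₁ - ν₂) u * rgtIntegrand g k ν₁ ν₂ l m 0 u := by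
  have h₁ := hasDerivAt_rgtIntegrand g k ν₁ ν₂ (-l + k + 1 - (ν₁ + ν₂)) m hu'
  simp only [rgtIntegrand_reflect] at h₁
  have h₂ := (((hasDerivAt_id (0 : ℂ)).mul_const (phiDot (ν₁ - ν₂) u)).cexp).mul
    (hasDerivAt_rgtIntegrand g k ν₁ ν₂ l m hu)
  rw [h₁.unique h₂]
  simp only [id, zero_mul, Complex.exp_zero, one_mul]
  ring

theorem circleIntegral_rgtIntegrandDeriv_reflect (hε : 0 ≤ ε)
    (hsub : {0} ×ˢ sphere (0 : ℂ) ε ⊆ rgtDomain k (ν₁ - ν₂)) (l m : ℤ) :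
    (∮ u in C(0, ε), rgtIntegrandDeriv g k ν₁ ν₂ (-l + k + 1 - (ν₁ + ν₂)) m 0 u) =
      -((∮ u in C(0, ε), rgtIntegrandDeriv g k ν₁ ν₂ l m 0 u) +
        ∮ u in C(0, ε), phiDot (ν₁ - ν₂) u * rgtIntegrand g k ν₁ ν₂ l m 0 u) := by
  have hmem {u : ℂ} (hu : u ∈ sphere (0 : ℂ) ε) : ((0 : ℂ), u) ∈ rgtDomain k (ν₁ - ν₂) :=
    hsub ⟨rfl, hu⟩
  have hslice {G : ℂ → ℂ → ℂ} (hG : ContinuousOn (Function.uncurry G) (rgtDomain k (ν₁ - ν₂))) :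
      ContinuousOn (G 0) (sphere 0 ε) :=
    hG.comp (by fun_prop) fun _ hu => hmem hu
  have hφ : ContinuousOn (phiDot (ν₁ - ν₂)) (sphere 0 ε) :=
    (differentiableOn_phiDot _).continuousOn.mono fun _ hu => (hmem hu).1
  calc (∮ u in C(0, ε), rgtIntegrandDeriv g k ν₁ ν₂ (-l + k + 1 - (ν₁ + ν₂)) m 0 u)
      = -∮ u in C(0, ε), rgtIntegrandDeriv g k ν₁ ν₂ (-l + k + 1 - (ν₁ + ν₂)) m 0 (-u) := by
        rw [circleIntegral.integral_comp_neg, neg_neg]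
    _ = -∮ u in C(0, ε), (rgtIntegrandDeriv g k ν₁ ν₂ l m 0 u +
          phiDot (ν₁ - ν₂) u * rgtIntegrand g k ν₁ ν₂ l m 0 u) := by
        rw [circleIntegral.integral_congr hε fun u hu =>
          rgtIntegrandDeriv_reflect l m (hmem hu) (hmem (by simpa using hu))]
    _ = _ := congrArg Neg.neg <| circleIntegral.integral_add
          ((hslice (continuousOn_rgtIntegrandDeriv g k ν₁ ν₂ l m)).circleIntegrable hε)
          ((hφ.mul (hslice (continuousOn_rgtIntegrand g k ν₁ ν₂ l m))).circleIntegrable hε)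

end Reflection

theorem stmt16_general (g k : ℕ) (ν₁ ν₂ : ℤ) (l m : ℤ) :
    ∃ ε₀ > (0 : ℝ), ∀ ε : ℝ, 0 < ε → ε < ε₀ →
      Rgt g k ν₁ ν₂ ε l m
        = -Rgt g k ν₁ ν₂ ε (-l + (k : ℤ) + 1 - (ν₁ + ν₂)) m -
            (-(2 * (k : ℂ) + 4)) ^ g *
              ((2 * (Real.pi : ℂ) * Complex.I)⁻¹ *
                ∮ u in C(0, ε),
                  (Complex.exp (u * ((l : ℂ) + (m : ℂ) + 1)) -
                        Complex.exp (u * ((l : ℂ) - (m : ℂ)))) *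
                      Complex.exp (u * ((ν₁ : ℂ) + (ν₂ : ℂ)) / 2) * phiDot (ν₁ - ν₂) u /
                    ((2 * Complex.sinh (u / 2)) ^ (2 * g) *
                      (1 - Complex.exp (u * ((k : ℂ) + 2))))) := by
  refine ⟨1 / ((k : ℝ) + 2), by positivity, fun ε hε hεk => ?_⟩
  have hsub : {0} ×ˢ sphere (0 : ℂ) ε ⊆ rgtDomain k (ν₁ - ν₂) := by
    rintro ⟨_, u⟩ ⟨rfl, hu⟩
    rw [mem_sphere_zero_iff_norm] at hu
    refine zero_mem_rgtDomain (norm_pos_iff.mp (hu ▸ hε)) ?_ _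
    rwa [hu, ← lt_div_iff₀ (by positivity)]
  have hres : (∮ u in C(0, ε), phiDot (ν₁ - ν₂) u * rgtIntegrand g k ν₁ ν₂ l m 0 u) =
      (2 * (k : ℂ) + 4) ^ g * ∮ u in C(0, ε),
        rgtWeight ν₁ ν₂ l m u * phiDot (ν₁ - ν₂) u /
          ((2 * Complex.sinh (u / 2)) ^ (2 * g) * (1 - Complex.exp (u * ((k : ℂ) + 2)))) := by
    rw [← circleIntegral.integral_const_mul]
    congr 1 with u
    simp only [rgtIntegrand, zero_mul, add_zero]
    ring
  unfold rgtWeight at hres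
  rw [Rgt_eq_circleIntegral_rgtIntegrandDeriv hε.le hsub,
    Rgt_eq_circleIntegral_rgtIntegrandDeriv hε.le hsub,
    circleIntegral_rgtIntegrandDeriv_reflect hε.le hsub, hres, neg_pow (2 * (k : ℂ) + 4)]
  ring

/-- Serre-duality antisymmetry for the rank-2 residue polynomial:
`R_>^ν(k;λ,μ) = −R_>^ν(k; −λ+k+1−(ν₁+ν₂), μ) − (−(2k+4))^g ·
Res_{u=0}[(e^{u(λ+μ+1)} − e^{u(λ−μ)}) e^{u(ν₁+ν₂)/2} φ̇(u) /
((2sinh(u/2))^{2g}(1 − e^{u(k+2)}))] du`, the residue being extracted by the contour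
integral `(1/2πi)∮_{|u|=ε}` for small `ε`. -/
theorem stmt16 (g k : ℕ) (hg : 2 ≤ g) (hk : 0 < k) (ν₁ ν₂ : ℤ) (hν : ν₂ ≤ ν₁) (l m : ℤ) :
    ∃ ε₀ > (0 : ℝ), ∀ ε : ℝ, 0 < ε → ε < ε₀ →
      Rgt g k ν₁ ν₂ ε l m
        = -Rgt g k ν₁ ν₂ ε (-l + (k : ℤ) + 1 - (ν₁ + ν₂)) m -
            (-(2 * (k : ℂ) + 4)) ^ g *
              ((2 * (Real.pi : ℂ) * Complex.I)⁻¹ *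
                ∮ u in C(0, ε),
                  (Complex.exp (u * ((l : ℂ) + (m : ℂ) + 1)) -
                        Complex.exp (u * ((l : ℂ) - (m : ℂ)))) *
                      Complex.exp (u * ((ν₁ : ℂ) + (ν₂ : ℂ)) / 2) * phiDot (ν₁ - ν₂) u /
                    ((2 * Complex.sinh (u / 2)) ^ (2 * g) *
                      (1 - Complex.exp (u * ((k : ℂ) + 2))))) :=
  stmt16_general g k ν₁ ν₂ l m
end
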